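/- For all real numbers x > 0 and y > 0, the integral H_{1,1,1}(x,y) = ∫₀^∞ (u+1)^{-1}(ux+1)^{-1}(uy+1)^{-1} u^{3/2} du converges and equals π(√x + √y + 1)/((√x + 1) √x (y + √y)(√x + √y)). -/

import Mathlib

open MeasureTheory Real Filter Topology Set


lemma hasDerivAt_arctan_ksqrt (k u : ℝ) (hu : 0 < u) :
    HasDerivAt (fun v : ℝ => arctan (k * Real.sqrt v))
      (k / (2 * Real.sqrt u * (1 + k ^ 2 * u))) u := by
  have h1 : HasDerivAt (fun v : ℝ => k * Real.sqrt v) (k * (1 / (2 * Real.sqrt u))) u :=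
    (Real.hasDerivAt_sqrt hu.ne').const_mul k
  have h2 := (Real.hasDerivAt_arctan (k * Real.sqrt u)).comp u h1
  refine h2.congr_deriv (Eq.symm ?_)
  obtain ⟨s, hs0, rfl⟩ : ∃ s : ℝ, 0 < s ∧ s ^ 2 = u := ⟨Real.sqrt u, Real.sqrt_pos.2 hu, Real.sq_sqrt hu.le⟩
  rw [Real.sqrt_sq hs0.le]
  have h1s : (0:ℝ) < 1 + k ^ 2 * s ^ 2 := by positivity
  field_simp

lemma hasDerivAt_sqrt_div (k u : ℝ) (hu : 0 < u) :
    HasDerivAt (fun v : ℝ => Real.sqrt v / (1 + k ^ 2 * v))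
      ((1 - k ^ 2 * u) / (2 * Real.sqrt u * (1 + k ^ 2 * u) ^ 2)) u := by
  have hd : (1 : ℝ) + k ^ 2 * u ≠ 0 := by positivity
  have h1 : HasDerivAt (fun v : ℝ => (1 : ℝ) + k ^ 2 * v) (k ^ 2) u := by
    simpa using ((hasDerivAt_id u).const_mul (k ^ 2)).const_add 1
  have h2 := (Real.hasDerivAt_sqrt hu.ne').div h1 hd
  refine h2.congr_deriv (Eq.symm ?_)
  obtain ⟨s, hs0, rfl⟩ : ∃ s : ℝ, 0 < s ∧ s ^ 2 = u := ⟨Real.sqrt u, Real.sqrt_pos.2 hu, Real.sq_sqrt hu.le⟩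
  rw [Real.sqrt_sq hs0.le]
  have h1s : (0:ℝ) < 1 + k ^ 2 * s ^ 2 := by positivity
  field_simp
  ring

lemma hasDerivAt_sqrt_div_sq (u : ℝ) (hu : 0 < u) :
    HasDerivAt (fun v : ℝ => Real.sqrt v / (1 + v) ^ 2)
      ((1 - 3 * u) / (2 * Real.sqrt u * (1 + u) ^ 3)) u := by
  have hd : ((1 : ℝ) + u) ^ 2 ≠ 0 := by positivity
  have h1 : HasDerivAt (fun v : ℝ => ((1 : ℝ) + v) ^ 2) (2 * (1 + u)) u := by
    have := ((hasDerivAt_id u).const_add 1).pow 2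
    simp at this; exact this
  have h2 := (Real.hasDerivAt_sqrt hu.ne').div h1 hd
  refine h2.congr_deriv (Eq.symm ?_)
  obtain ⟨s, hs0, rfl⟩ : ∃ s : ℝ, 0 < s ∧ s ^ 2 = u := ⟨Real.sqrt u, Real.sqrt_pos.2 hu, Real.sq_sqrt hu.le⟩
  rw [Real.sqrt_sq hs0.le]
  have h1s : (0:ℝ) < 1 + s ^ 2 := by positivity
  field_simp
  ring


lemma tendsto_sqrt_atTop' : Tendsto Real.sqrt atTop atTop := by
  have h := tendsto_rpow_atTop (y := (1/2:ℝ)) (by norm_num)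
  refine h.congr' ?_
  filter_upwards [eventually_ge_atTop (0:ℝ)] with v _
  rw [Real.sqrt_eq_rpow]

lemma tendsto_arctan_ksqrt (k : ℝ) (hk : 0 < k) :
    Tendsto (fun v : ℝ => arctan (k * Real.sqrt v)) atTop (𝓝 (π / 2)) := by
  have h1 : Tendsto (fun v : ℝ => k * Real.sqrt v) atTop atTop :=
    tendsto_sqrt_atTop'.const_mul_atTop hk
  exact (Real.tendsto_arctan_atTop.mono_right nhdsWithin_le_nhds).comp h1

lemma tendsto_sqrt_div_zero (k : ℝ) (hk : 0 < k) :
    Tendsto (fun v : ℝ => Real.sqrt v / (1 + k ^ 2 * v)) atTop (𝓝 0) := by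
  have h1 : Tendsto (fun v : ℝ => 1 / Real.sqrt v + k ^ 2 * Real.sqrt v) atTop atTop := by
    apply Filter.Tendsto.nonneg_add_atTop
    · intro v; positivity
    · exact tendsto_sqrt_atTop'.const_mul_atTop (by positivity)
  refine h1.inv_tendsto_atTop.congr' ?_
  filter_upwards [eventually_gt_atTop (0:ℝ)] with v hv
  obtain ⟨s, hs0, rfl⟩ : ∃ s : ℝ, 0 < s ∧ s ^ 2 = v :=
    ⟨Real.sqrt v, Real.sqrt_pos.2 hv, Real.sq_sqrt hv.le⟩
  rw [Real.sqrt_sq hs0.le]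
  have : (0:ℝ) < 1 + k ^ 2 * s ^ 2 := by positivity
  rw [Pi.inv_apply]
  field_simp
  rw [Real.sqrt_sq hs0.le]

lemma tendsto_sqrt_div_sq_zero : Tendsto (fun v : ℝ => Real.sqrt v / (1 + v) ^ 2) atTop (𝓝 0) := by
  have h1 := tendsto_sqrt_div_zero 1 one_pos
  have h2 : Tendsto (fun v : ℝ => (1 + v)⁻¹) atTop (𝓝 0) := by
    apply Filter.Tendsto.inv_tendsto_atTop
    exact tendsto_atTop_add_const_left _ 1 tendsto_id
  have h3 := h1.mul h2
  rw [mul_zero] at h3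
  refine h3.congr' ?_
  filter_upwards [eventually_gt_atTop (0:ℝ)] with v hv
  have : (0:ℝ) < 1 + v := by linarith
  field_simp

lemma core_lemma (x y L : ℝ) (hx : 0 < x) (hy : 0 < y) (F : ℝ → ℝ)
    (hcont : ContinuousWithinAt F (Set.Ici 0) 0) (hF0 : F 0 = 0)
    (hderiv : ∀ u ∈ Set.Ioi (0:ℝ),
      HasDerivAt F ((u + 1)⁻¹ * (u * x + 1)⁻¹ * (u * y + 1)⁻¹ * u ^ ((3 : ℝ) / 2)) u)
    (htop : Tendsto F atTop (𝓝 L)) :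
    IntegrableOn
      (fun u : ℝ => (u + 1)⁻¹ * (u * x + 1)⁻¹ * (u * y + 1)⁻¹ * u ^ ((3 : ℝ) / 2))
      (Set.Ioi 0) ∧
    ∫ u in Set.Ioi (0:ℝ), (u + 1)⁻¹ * (u * x + 1)⁻¹ * (u * y + 1)⁻¹ * u ^ ((3 : ℝ) / 2) = L := by
  have hpos : ∀ u ∈ Set.Ioi (0:ℝ),
      0 ≤ (u + 1)⁻¹ * (u * x + 1)⁻¹ * (u * y + 1)⁻¹ * u ^ ((3 : ℝ) / 2) := by
    intro u hu
    have hu0 : (0:ℝ) < u := hu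
    have h1 : (0:ℝ) < u + 1 := by linarith
    have h2 : (0:ℝ) < u * x + 1 := by nlinarith
    have h3 : (0:ℝ) < u * y + 1 := by nlinarith
    have h4 : (0:ℝ) ≤ u ^ ((3:ℝ)/2) := Real.rpow_nonneg hu0.le _
    exact mul_nonneg (mul_nonneg (mul_nonneg (inv_nonneg.2 h1.le) (inv_nonneg.2 h2.le))
      (inv_nonneg.2 h3.le)) h4
  refine ⟨integrableOn_Ioi_deriv_of_nonneg hcont hderiv hpos htop, ?_⟩
  rw [integral_Ioi_of_hasDerivAt_of_nonneg hcont hderiv hpos htop, hF0, sub_zero]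

lemma rpow_three_halves (u : ℝ) (hu : 0 < u) : u ^ ((3:ℝ)/2) = u * Real.sqrt u := by
  rw [show (3:ℝ)/2 = 1 + 1/2 by norm_num, Real.rpow_add hu, Real.rpow_one, Real.sqrt_eq_rpow]

lemma eq_of_sq_eq_sq' {a b : ℝ} (ha : 0 ≤ a) (hb : 0 ≤ b) (h : a ^ 2 = b ^ 2) : a = b := by
  rw [← Real.sqrt_sq ha, ← Real.sqrt_sq hb, h]

lemma case_p1 (q : ℝ) (hq : 0 < q) (hq1 : q ≠ 1) :
    IntegrableOn
      (fun u : ℝ => (u + 1)⁻¹ * (u * 1 ^ 2 + 1)⁻¹ * (u * q ^ 2 + 1)⁻¹ * u ^ ((3 : ℝ) / 2))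
      (Set.Ioi 0) ∧
    ∫ u in Set.Ioi (0:ℝ), (u + 1)⁻¹ * (u * 1 ^ 2 + 1)⁻¹ * (u * q ^ 2 + 1)⁻¹ * u ^ ((3 : ℝ) / 2)
      = π * (1 + q + 1) / ((1 + 1) * 1 * (q ^ 2 + q) * (1 + q)) := by
  have hq0 : q ≠ 0 := hq.ne'
  have hq21 : q ^ 2 - 1 ≠ 0 := by
    intro h
    exact hq1 (eq_of_sq_eq_sq' hq.le zero_le_one (by nlinarith))
  have hq1' : (0:ℝ) < 1 + q := by linarith
  set c1 : ℝ := (q^2 - 3) / (q^2 - 1)^2 with hc1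
  set c3 : ℝ := 2 / (q * (q^2 - 1)^2) with hc3
  set d1 : ℝ := -(1 / (q^2 - 1)) with hd1
  set F : ℝ → ℝ := fun v =>
    c1 * arctan (Real.sqrt v) + c3 * arctan (q * Real.sqrt v)
      + d1 * (Real.sqrt v / (1 + 1 ^ 2 * v)) with hF
  have hcont : ContinuousWithinAt F (Set.Ici 0) 0 := by
    apply ContinuousAt.continuousWithinAt
    apply ContinuousAt.add
    apply ContinuousAt.add
    · exact (continuous_const.mul (Real.continuous_arctan.comp Real.continuous_sqrt)).continuousAt
    · exact (continuous_const.mul (Real.continuous_arctan.comp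
        (continuous_const.mul Real.continuous_sqrt))).continuousAt
    · exact continuousAt_const.mul ((Real.continuous_sqrt.continuousAt).div
        (by fun_prop) (by norm_num))
  have hF0 : F 0 = 0 := by simp [hF]
  have hderiv : ∀ u ∈ Set.Ioi (0:ℝ),
      HasDerivAt F ((u + 1)⁻¹ * (u * 1 ^ 2 + 1)⁻¹ * (u * q ^ 2 + 1)⁻¹ * u ^ ((3 : ℝ) / 2)) u := by
    intro u hu
    have hu0 : (0:ℝ) < u := hu
    have h1 := ((hasDerivAt_arctan_ksqrt 1 u hu0).const_mul c1)
    have h2 := ((hasDerivAt_arctan_ksqrt q u hu0).const_mul c3)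
    have h3 := ((hasDerivAt_sqrt_div 1 u hu0).const_mul d1)
    have H := (h1.add h2).add h3
    simp only [one_mul] at H
    refine H.congr_deriv (Eq.symm ?_)
    rw [rpow_three_halves u hu0]
    obtain ⟨s, hs0, rfl⟩ : ∃ s : ℝ, 0 < s ∧ s ^ 2 = u :=
      ⟨Real.sqrt u, Real.sqrt_pos.2 hu0, Real.sq_sqrt hu0.le⟩
    rw [Real.sqrt_sq hs0.le, hc1, hc3, hd1]
    have e1 : (0:ℝ) < 1 + s ^ 2 := by positivity
    have e2 : s ≠ 0 := hs0.ne'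
    have e3 : (1:ℝ) + s ^ 2 ≠ 0 := e1.ne'
    have e4 : s ^ 2 + 1 ≠ 0 := by positivity
    have e5 : s ^ 2 * 1 ^ 2 + 1 ≠ 0 := by positivity
    have e6 : s ^ 2 * q ^ 2 + 1 ≠ 0 := by positivity
    have e7 : (1:ℝ) + q ^ 2 * s ^ 2 ≠ 0 := by positivity
    field_simp
    ring
  have htop : Tendsto F atTop
      (𝓝 (π * (1 + q + 1) / ((1 + 1) * 1 * (q ^ 2 + q) * (1 + q)))) := by
    have t1 := (tendsto_arctan_ksqrt 1 one_pos).const_mul c1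
    have t2 := (tendsto_arctan_ksqrt q hq).const_mul c3
    have t3 := (tendsto_sqrt_div_zero 1 one_pos).const_mul d1
    have H := (t1.add t2).add t3
    simp only [one_mul, mul_zero, add_zero] at H
    have hval : c1 * (π/2) + c3 * (π/2)
        = π * (1 + q + 1) / ((1 + 1) * 1 * (q ^ 2 + q) * (1 + q)) := by
      rw [hc1, hc3]
      have h8 : q ^ 2 + q ≠ 0 := by positivity
      have h9 : (1:ℝ) + q ≠ 0 := hq1'.ne'
      field_simp
      ring
    rw [← hval]
    exact H
  exact core_lemma (1^2) (q^2) _ (by norm_num) (by positivity) F hcont hF0 hderiv htop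

lemma case_q1 (p : ℝ) (hp : 0 < p) (hp1 : p ≠ 1) :
    IntegrableOn
      (fun u : ℝ => (u + 1)⁻¹ * (u * p ^ 2 + 1)⁻¹ * (u * 1 ^ 2 + 1)⁻¹ * u ^ ((3 : ℝ) / 2))
      (Set.Ioi 0) ∧
    ∫ u in Set.Ioi (0:ℝ), (u + 1)⁻¹ * (u * p ^ 2 + 1)⁻¹ * (u * 1 ^ 2 + 1)⁻¹ * u ^ ((3 : ℝ) / 2)
      = π * (p + 1 + 1) / ((p + 1) * p * ((1:ℝ) ^ 2 + 1) * (p + 1)) := by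
  have hp0 : p ≠ 0 := hp.ne'
  have hp21 : p ^ 2 - 1 ≠ 0 := by
    intro h
    exact hp1 (eq_of_sq_eq_sq' hp.le zero_le_one (by nlinarith))
  have hp1' : (0:ℝ) < p + 1 := by linarith
  set c1 : ℝ := (p^2 - 3) / (p^2 - 1)^2 with hc1
  set c2 : ℝ := 2 / (p * (p^2 - 1)^2) with hc2
  set d1 : ℝ := -(1 / (p^2 - 1)) with hd1
  set F : ℝ → ℝ := fun v =>
    c1 * arctan (Real.sqrt v) + c2 * arctan (p * Real.sqrt v)
      + d1 * (Real.sqrt v / (1 + 1 ^ 2 * v)) with hF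
  have hcont : ContinuousWithinAt F (Set.Ici 0) 0 := by
    apply ContinuousAt.continuousWithinAt
    apply ContinuousAt.add
    apply ContinuousAt.add
    · exact (continuous_const.mul (Real.continuous_arctan.comp Real.continuous_sqrt)).continuousAt
    · exact (continuous_const.mul (Real.continuous_arctan.comp
        (continuous_const.mul Real.continuous_sqrt))).continuousAt
    · exact continuousAt_const.mul ((Real.continuous_sqrt.continuousAt).div
        (by fun_prop) (by norm_num))
  have hF0 : F 0 = 0 := by simp [hF]
  have hderiv : ∀ u ∈ Set.Ioi (0:ℝ),
      HasDerivAt F ((u + 1)⁻¹ * (u * p ^ 2 + 1)⁻¹ * (u * 1 ^ 2 + 1)⁻¹ * u ^ ((3 : ℝ) / 2)) u := by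
    intro u hu
    have hu0 : (0:ℝ) < u := hu
    have h1 := ((hasDerivAt_arctan_ksqrt 1 u hu0).const_mul c1)
    have h2 := ((hasDerivAt_arctan_ksqrt p u hu0).const_mul c2)
    have h3 := ((hasDerivAt_sqrt_div 1 u hu0).const_mul d1)
    have H := (h1.add h2).add h3
    simp only [one_mul] at H
    refine H.congr_deriv (Eq.symm ?_)
    rw [rpow_three_halves u hu0]
    obtain ⟨s, hs0, rfl⟩ : ∃ s : ℝ, 0 < s ∧ s ^ 2 = u :=
      ⟨Real.sqrt u, Real.sqrt_pos.2 hu0, Real.sq_sqrt hu0.le⟩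
    rw [Real.sqrt_sq hs0.le, hc1, hc2, hd1]
    have e1 : (0:ℝ) < 1 + s ^ 2 := by positivity
    have e2 : s ≠ 0 := hs0.ne'
    have e3 : (1:ℝ) + s ^ 2 ≠ 0 := e1.ne'
    have e4 : s ^ 2 + 1 ≠ 0 := by positivity
    have e5 : s ^ 2 * 1 ^ 2 + 1 ≠ 0 := by positivity
    have e6 : s ^ 2 * p ^ 2 + 1 ≠ 0 := by positivity
    have e7 : (1:ℝ) + p ^ 2 * s ^ 2 ≠ 0 := by positivity
    field_simp
    ring
  have htop : Tendsto F atTop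
      (𝓝 (π * (p + 1 + 1) / ((p + 1) * p * ((1:ℝ) ^ 2 + 1) * (p + 1)))) := by
    have t1 := (tendsto_arctan_ksqrt 1 one_pos).const_mul c1
    have t2 := (tendsto_arctan_ksqrt p hp).const_mul c2
    have t3 := (tendsto_sqrt_div_zero 1 one_pos).const_mul d1
    have H := (t1.add t2).add t3
    simp only [one_mul, mul_zero, add_zero] at H
    have hval : c1 * (π/2) + c2 * (π/2)
        = π * (p + 1 + 1) / ((p + 1) * p * ((1:ℝ) ^ 2 + 1) * (p + 1)) := by
      rw [hc1, hc2]
      have h9 : p + 1 ≠ 0 := hp1'.ne'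
      field_simp
      ring
    rw [← hval]
    exact H
  exact core_lemma (p^2) (1^2) _ (by positivity) (by norm_num) F hcont hF0 hderiv htop

lemma case_pq (p : ℝ) (hp : 0 < p) (hp1 : p ≠ 1) :
    IntegrableOn
      (fun u : ℝ => (u + 1)⁻¹ * (u * p ^ 2 + 1)⁻¹ * (u * p ^ 2 + 1)⁻¹ * u ^ ((3 : ℝ) / 2))
      (Set.Ioi 0) ∧
    ∫ u in Set.Ioi (0:ℝ), (u + 1)⁻¹ * (u * p ^ 2 + 1)⁻¹ * (u * p ^ 2 + 1)⁻¹ * u ^ ((3 : ℝ) / 2)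
      = π * (p + p + 1) / ((p + 1) * p * (p ^ 2 + p) * (p + p)) := by
  have hp0 : p ≠ 0 := hp.ne'
  have hp21 : p ^ 2 - 1 ≠ 0 := by
    intro h
    exact hp1 (eq_of_sq_eq_sq' hp.le zero_le_one (by nlinarith))
  have hp1' : (0:ℝ) < p + 1 := by linarith
  set c1 : ℝ := 2 / (1 - p^2)^2 with hc1
  set c2 : ℝ := -((3*p^2 - 1) / (p^3 * (p^2 - 1)^2)) with hc2
  set d2 : ℝ := 1 / (p^2 * (p^2 - 1)) with hd2
  set F : ℝ → ℝ := fun v =>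
    c1 * arctan (Real.sqrt v) + c2 * arctan (p * Real.sqrt v)
      + d2 * (Real.sqrt v / (1 + p ^ 2 * v)) with hF
  have hcont : ContinuousWithinAt F (Set.Ici 0) 0 := by
    apply ContinuousAt.continuousWithinAt
    apply ContinuousAt.add
    apply ContinuousAt.add
    · exact (continuous_const.mul (Real.continuous_arctan.comp Real.continuous_sqrt)).continuousAt
    · exact (continuous_const.mul (Real.continuous_arctan.comp
        (continuous_const.mul Real.continuous_sqrt))).continuousAt
    · exact continuousAt_const.mul ((Real.continuous_sqrt.continuousAt).div
        (by fun_prop) (by norm_num))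
  have hF0 : F 0 = 0 := by simp [hF]
  have hderiv : ∀ u ∈ Set.Ioi (0:ℝ),
      HasDerivAt F ((u + 1)⁻¹ * (u * p ^ 2 + 1)⁻¹ * (u * p ^ 2 + 1)⁻¹ * u ^ ((3 : ℝ) / 2)) u := by
    intro u hu
    have hu0 : (0:ℝ) < u := hu
    have h1 := ((hasDerivAt_arctan_ksqrt 1 u hu0).const_mul c1)
    have h2 := ((hasDerivAt_arctan_ksqrt p u hu0).const_mul c2)
    have h3 := ((hasDerivAt_sqrt_div p u hu0).const_mul d2)
    have H := (h1.add h2).add h3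
    simp only [one_mul] at H
    refine H.congr_deriv (Eq.symm ?_)
    rw [rpow_three_halves u hu0]
    obtain ⟨s, hs0, rfl⟩ : ∃ s : ℝ, 0 < s ∧ s ^ 2 = u :=
      ⟨Real.sqrt u, Real.sqrt_pos.2 hu0, Real.sq_sqrt hu0.le⟩
    rw [Real.sqrt_sq hs0.le, hc1, hc2, hd2]
    have e1 : (0:ℝ) < 1 + s ^ 2 := by positivity
    have e2 : s ≠ 0 := hs0.ne'
    have e3 : (1:ℝ) + s ^ 2 ≠ 0 := e1.ne'
    have e4 : s ^ 2 + 1 ≠ 0 := by positivity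
    have e6 : s ^ 2 * p ^ 2 + 1 ≠ 0 := by positivity
    have e7 : (1:ℝ) + p ^ 2 * s ^ 2 ≠ 0 := by positivity
    have e8 : (1:ℝ) - p ^ 2 ≠ 0 := by intro h; apply hp21; linarith
    field_simp
    ring
  have htop : Tendsto F atTop
      (𝓝 (π * (p + p + 1) / ((p + 1) * p * (p ^ 2 + p) * (p + p)))) := by
    have t1 := (tendsto_arctan_ksqrt 1 one_pos).const_mul c1
    have t2 := (tendsto_arctan_ksqrt p hp).const_mul c2
    have t3 := (tendsto_sqrt_div_zero p hp).const_mul d2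
    have H := (t1.add t2).add t3
    simp only [one_mul, mul_zero, add_zero] at H
    have hval : c1 * (π/2) + c2 * (π/2)
        = π * (p + p + 1) / ((p + 1) * p * (p ^ 2 + p) * (p + p)) := by
      rw [hc1, hc2]
      have h8 : p ^ 2 + p ≠ 0 := by positivity
      have h9 : p + 1 ≠ 0 := hp1'.ne'
      have h10 : p + p ≠ 0 := by positivity
      have h11 : (1 - p^2) ≠ 0 := by intro h; apply hp21; linarith
      field_simp
      ring
    rw [← hval]
    exact H
  exact core_lemma (p^2) (p^2) _ (by positivity) (by positivity) F hcont hF0 hderiv htop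

lemma case_distinct (p q : ℝ) (hp : 0 < p) (hq : 0 < q) (hp1 : p ≠ 1) (hq1 : q ≠ 1)
    (hpq : p ≠ q) :
    IntegrableOn
      (fun u : ℝ => (u + 1)⁻¹ * (u * p ^ 2 + 1)⁻¹ * (u * q ^ 2 + 1)⁻¹ * u ^ ((3 : ℝ) / 2))
      (Set.Ioi 0) ∧
    ∫ u in Set.Ioi (0:ℝ), (u + 1)⁻¹ * (u * p ^ 2 + 1)⁻¹ * (u * q ^ 2 + 1)⁻¹ * u ^ ((3 : ℝ) / 2)
      = π * (p + q + 1) / ((p + 1) * p * (q ^ 2 + q) * (p + q)) := by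
  have hp0 : p ≠ 0 := hp.ne'
  have hq0 : q ≠ 0 := hq.ne'
  have hp21 : p ^ 2 - 1 ≠ 0 := by
    intro h
    exact hp1 (eq_of_sq_eq_sq' hp.le zero_le_one (by nlinarith))
  have hq21 : q ^ 2 - 1 ≠ 0 := by
    intro h
    exact hq1 (eq_of_sq_eq_sq' hq.le zero_le_one (by nlinarith))
  have hpq2 : p ^ 2 - q ^ 2 ≠ 0 := by
    intro h
    exact hpq (eq_of_sq_eq_sq' hp.le hq.le (by nlinarith))
  have h1p2 : (1:ℝ) - p^2 ≠ 0 := by intro h; apply hp21; linarith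
  have h1q2 : (1:ℝ) - q^2 ≠ 0 := by intro h; apply hq21; linarith
  have hqp2 : q ^ 2 - p ^ 2 ≠ 0 := by intro h; apply hpq2; linarith
  set c1 : ℝ := 2 / ((1 - p^2) * (1 - q^2)) with hc1
  set c2 : ℝ := 2 / (p * (p^2 - 1) * (p^2 - q^2)) with hc2
  set c3 : ℝ := 2 / (q * (q^2 - 1) * (q^2 - p^2)) with hc3
  set F : ℝ → ℝ := fun v =>
    c1 * arctan (Real.sqrt v) + c2 * arctan (p * Real.sqrt v)
      + c3 * arctan (q * Real.sqrt v) with hF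
  have hcont : ContinuousWithinAt F (Set.Ici 0) 0 := by
    apply ContinuousAt.continuousWithinAt
    apply ContinuousAt.add
    apply ContinuousAt.add
    · exact (continuous_const.mul (Real.continuous_arctan.comp Real.continuous_sqrt)).continuousAt
    · exact (continuous_const.mul (Real.continuous_arctan.comp
        (continuous_const.mul Real.continuous_sqrt))).continuousAt
    · exact (continuous_const.mul (Real.continuous_arctan.comp
        (continuous_const.mul Real.continuous_sqrt))).continuousAt
  have hF0 : F 0 = 0 := by simp [hF]
  have hderiv : ∀ u ∈ Set.Ioi (0:ℝ),
      HasDerivAt F ((u + 1)⁻¹ * (u * p ^ 2 + 1)⁻¹ * (u * q ^ 2 + 1)⁻¹ * u ^ ((3 : ℝ) / 2)) u := by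
    intro u hu
    have hu0 : (0:ℝ) < u := hu
    have h1 := ((hasDerivAt_arctan_ksqrt 1 u hu0).const_mul c1)
    have h2 := ((hasDerivAt_arctan_ksqrt p u hu0).const_mul c2)
    have h3 := ((hasDerivAt_arctan_ksqrt q u hu0).const_mul c3)
    have H := (h1.add h2).add h3
    simp only [one_mul] at H
    refine H.congr_deriv (Eq.symm ?_)
    rw [rpow_three_halves u hu0]
    obtain ⟨s, hs0, rfl⟩ : ∃ s : ℝ, 0 < s ∧ s ^ 2 = u :=
      ⟨Real.sqrt u, Real.sqrt_pos.2 hu0, Real.sq_sqrt hu0.le⟩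
    rw [Real.sqrt_sq hs0.le, hc1, hc2, hc3]
    have e1 : (0:ℝ) < 1 + s ^ 2 := by positivity
    have e2 : s ≠ 0 := hs0.ne'
    have e3 : (1:ℝ) + s ^ 2 ≠ 0 := e1.ne'
    have e4 : s ^ 2 + 1 ≠ 0 := by positivity
    have e6 : s ^ 2 * p ^ 2 + 1 ≠ 0 := by positivity
    have e7 : (1:ℝ) + p ^ 2 * s ^ 2 ≠ 0 := by positivity
    have e8 : s ^ 2 * q ^ 2 + 1 ≠ 0 := by positivity
    have e9 : (1:ℝ) + q ^ 2 * s ^ 2 ≠ 0 := by positivity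
    field_simp
    ring
  have htop : Tendsto F atTop
      (𝓝 (π * (p + q + 1) / ((p + 1) * p * (q ^ 2 + q) * (p + q)))) := by
    have t1 := (tendsto_arctan_ksqrt 1 one_pos).const_mul c1
    have t2 := (tendsto_arctan_ksqrt p hp).const_mul c2
    have t3 := (tendsto_arctan_ksqrt q hq).const_mul c3
    have H := (t1.add t2).add t3
    simp only [one_mul] at H
    have hval : c1 * (π/2) + c2 * (π/2) + c3 * (π/2)
        = π * (p + q + 1) / ((p + 1) * p * (q ^ 2 + q) * (p + q)) := by
      rw [hc1, hc2, hc3]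
      have h8 : q ^ 2 + q ≠ 0 := by positivity
      have h9 : p + 1 ≠ 0 := by positivity
      have h10 : p + q ≠ 0 := by positivity
      field_simp
      ring
    rw [← hval]
    exact H
  exact core_lemma (p^2) (q^2) _ (by positivity) (by positivity) F hcont hF0 hderiv htop

lemma case_one (p q : ℝ) (hp : 0 < p) (hq : 0 < q) (hp1 : p = 1) (hq1 : q = 1) :
    IntegrableOn
      (fun u : ℝ => (u + 1)⁻¹ * (u * p ^ 2 + 1)⁻¹ * (u * q ^ 2 + 1)⁻¹ * u ^ ((3 : ℝ) / 2))
      (Set.Ioi 0) ∧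
    ∫ u in Set.Ioi (0:ℝ), (u + 1)⁻¹ * (u * p ^ 2 + 1)⁻¹ * (u * q ^ 2 + 1)⁻¹ * u ^ ((3 : ℝ) / 2)
      = π * (p + q + 1) / ((p + 1) * p * (q ^ 2 + q) * (p + q)) := by
  subst hp1 hq1
  set F : ℝ → ℝ := fun v =>
    (3/4) * arctan (Real.sqrt v) + (-(5/4)) * (Real.sqrt v / (1 + 1 ^ 2 * v))
      + (1/2) * (Real.sqrt v / (1 + v) ^ 2) with hF
  have hcont : ContinuousWithinAt F (Set.Ici 0) 0 := by
    apply ContinuousAt.continuousWithinAt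
    apply ContinuousAt.add
    apply ContinuousAt.add
    · exact (continuous_const.mul (Real.continuous_arctan.comp Real.continuous_sqrt)).continuousAt
    · exact (continuousAt_const.mul ((Real.continuous_sqrt.continuousAt).div
        (by fun_prop) (by norm_num)))
    · exact (continuousAt_const.mul ((Real.continuous_sqrt.continuousAt).div
        (by fun_prop) (by norm_num)))
  have hF0 : F 0 = 0 := by simp [hF]
  have hderiv : ∀ u ∈ Set.Ioi (0:ℝ),
      HasDerivAt F ((u + 1)⁻¹ * (u * 1 ^ 2 + 1)⁻¹ * (u * 1 ^ 2 + 1)⁻¹ * u ^ ((3 : ℝ) / 2)) u := by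
    intro u hu
    have hu0 : (0:ℝ) < u := hu
    have h1 := ((hasDerivAt_arctan_ksqrt 1 u hu0).const_mul (3/4 : ℝ))
    have h2 := ((hasDerivAt_sqrt_div 1 u hu0).const_mul (-(5/4) : ℝ))
    have h3 := ((hasDerivAt_sqrt_div_sq u hu0).const_mul (1/2 : ℝ))
    have H := (h1.add h2).add h3
    simp only [one_mul] at H
    refine H.congr_deriv (Eq.symm ?_)
    rw [rpow_three_halves u hu0]
    obtain ⟨s, hs0, rfl⟩ : ∃ s : ℝ, 0 < s ∧ s ^ 2 = u :=
      ⟨Real.sqrt u, Real.sqrt_pos.2 hu0, Real.sq_sqrt hu0.le⟩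
    rw [Real.sqrt_sq hs0.le]
    have e1 : (0:ℝ) < 1 + s ^ 2 := by positivity
    have e2 : s ≠ 0 := hs0.ne'
    have e3 : (1:ℝ) + s ^ 2 ≠ 0 := e1.ne'
    have e4 : s ^ 2 + 1 ≠ 0 := by positivity
    have e5 : s ^ 2 * 1 ^ 2 + 1 ≠ 0 := by positivity
    field_simp
    ring
  have htop : Tendsto F atTop
      (𝓝 (π * (1 + 1 + 1) / ((1 + 1) * 1 * ((1:ℝ) ^ 2 + 1) * (1 + 1)))) := by
    have t1 := (tendsto_arctan_ksqrt 1 one_pos).const_mul (3/4 : ℝ)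
    have t2 := (tendsto_sqrt_div_zero 1 one_pos).const_mul (-(5/4) : ℝ)
    have t3 := tendsto_sqrt_div_sq_zero.const_mul (1/2 : ℝ)
    have H := (t1.add t2).add t3
    simp only [one_mul, mul_zero, add_zero] at H
    have : (3/4 : ℝ) * (π/2) = π * (1 + 1 + 1) / ((1 + 1) * 1 * ((1:ℝ) ^ 2 + 1) * (1 + 1)) := by
      ring
    rw [← this]
    exact H
  exact core_lemma (1^2) (1^2) _ (by norm_num) (by norm_num) F hcont hF0 hderiv htop


/-- For all reals `x, y > 0`, the integral
`H₁₁₁(x,y) = ∫₀^∞ (u+1)⁻¹ (ux+1)⁻¹ (uy+1)⁻¹ u^(3/2) du` converges and equals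
`π(√x + √y + 1) / ((√x+1)√x(y+√y)(√x+√y))`. -/
theorem H_one_one_one_eval (x y : ℝ) (hx : 0 < x) (hy : 0 < y) :
    IntegrableOn
      (fun u : ℝ => (u + 1)⁻¹ * (u * x + 1)⁻¹ * (u * y + 1)⁻¹ * u ^ ((3 : ℝ) / 2))
      (Set.Ioi 0) ∧
    ∫ u in Set.Ioi (0 : ℝ),
        (u + 1)⁻¹ * (u * x + 1)⁻¹ * (u * y + 1)⁻¹ * u ^ ((3 : ℝ) / 2) =
      Real.pi * (Real.sqrt x + Real.sqrt y + 1) /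
        ((Real.sqrt x + 1) * Real.sqrt x * (y + Real.sqrt y) *
          (Real.sqrt x + Real.sqrt y)) := by
  obtain ⟨p, hp, rfl⟩ : ∃ p, 0 < p ∧ p ^ 2 = x :=
    ⟨Real.sqrt x, Real.sqrt_pos.2 hx, Real.sq_sqrt hx.le⟩
  obtain ⟨q, hq, rfl⟩ : ∃ q, 0 < q ∧ q ^ 2 = y :=
    ⟨Real.sqrt y, Real.sqrt_pos.2 hy, Real.sq_sqrt hy.le⟩
  rw [Real.sqrt_sq hp.le, Real.sqrt_sq hq.le]
  rcases eq_or_ne p 1 with rfl | hp1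
  · rcases eq_or_ne q 1 with rfl | hq1
    · exact case_one 1 1 hp hq rfl rfl
    · exact case_p1 q hq hq1
  · rcases eq_or_ne q 1 with rfl | hq1
    · exact case_q1 p hp hp1
    · rcases eq_or_ne p q with rfl | hpq
      · exact case_pq p hp hp1
      · exact case_distinct p q hp hq hp1 hq1 hpq
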